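/- arXiv:2304.01580 — 2 statements merged into one kernel-verified Lean document; each statement's English description precedes it below -/
import Mathlib

section
/- Let v₁,…,v_N, and an additional template ṽ, all be uniform in {0,1}^n, with ṽ independent of the database, and condition on the event W̄_N that no two of v₁,…,v_N are within Hamming distance ε. Then N·V_ε - (N(N-1)/2)·I^ε_{ε+1} ≤ P(ṽ ∈ ∪_{k=1}^N B_ε(v_k) | W̄_N) ≤ N·V_ε, where V_ε is the normalized ε-ball volume and I^ε_{ε+1} is the normalized volume of the intersection of two ε-balls whose centers are at Hamming distance ε+1. -/
/-!
Given a separated database `f`, the matching probability is `|⋃ₖ B_ε(f k)| / 2ⁿ`, so the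
conditional probability is the average of this density over the separated databases, and it
suffices to bound it for each of them. The union bound gives the upper bound; the second
Bonferroni inequality gives the lower bound once each pairwise intersection has at most
`2ⁿ · I^ε_{ε+1}` points. Translating by `u`, the points of `B_ε(u) ∩ B_ε(v)` correspond to the
sets `X` with `|X| ≤ ε` and `|X ∆ D| ≤ ε`, where `D` is the set of coordinates where `u` and `v`
differ. Their number can only drop when `D` grows, and for `|D| = ε + 1` it is counted by
splitting `X` into `X ∩ D` and `X \ D`.
-/

open Finset

/-- Normalized volume of a Hamming ball of radius `ε` in `{0,1}^n`. -/
noncomputable def Vball (n ε : ℕ) : ℝ :=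
  (∑ k ∈ Finset.range (ε + 1), (n.choose k : ℝ)) / 2 ^ n

/-- Normalized volume of the intersection of two Hamming `ε`-balls in `{0,1}^n`
whose centers are at Hamming distance `d`. -/
noncomputable def Iball (n ε d : ℕ) : ℝ :=
  (∑ k ∈ Finset.Icc (d - ε) (min ε d),
      (d.choose k : ℝ) *
        ∑ i ∈ Finset.range (min (ε - k) (ε + k - d) + 1), ((n - d).choose i : ℝ)) / 2 ^ n

open scoped symmDiff BigOperators

section Counting

variable {ι α : Type*}

lemma sum_card_eq_sum_card_filter_mem [DecidableEq α] {s : Finset ι} {U : Finset α}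
    {t : ι → Finset α} (ht : ∀ i ∈ s, t i ⊆ U) :
    ∑ i ∈ s, #(t i) = ∑ x ∈ U, #{i ∈ s | x ∈ t i} := by
  rw [← sum_congr rfl fun i hi => congrArg card (inter_eq_right.mpr (ht i hi))]
  simp_rw [← filter_mem_eq_inter, card_eq_sum_ones, sum_filter]
  exact sum_comm

/-- The second Bonferroni inequality, with each unordered pair counted twice. -/
lemma two_mul_sum_card_le [DecidableEq ι] [DecidableEq α] (s : Finset ι) (A : ι → Finset α) :
    2 * ∑ i ∈ s, #(A i) ≤ 2 * #(s.biUnion A) + ∑ p ∈ s.offDiag, #(A p.1 ∩ A p.2) := by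
  set U := s.biUnion A
  have hA : ∑ i ∈ s, #(A i) = ∑ x ∈ U, #{i ∈ s | x ∈ A i} :=
    sum_card_eq_sum_card_filter_mem fun i hi => subset_biUnion_of_mem A hi
  have hAA : ∑ p ∈ s.offDiag, #(A p.1 ∩ A p.2) = ∑ x ∈ U, #({i ∈ s | x ∈ A i}.offDiag) := by
    rw [sum_card_eq_sum_card_filter_mem fun p hp =>
      inter_subset_left.trans (subset_biUnion_of_mem A (mem_offDiag.mp hp).1)]
    refine sum_congr rfl fun x _ => congrArg card ?_
    ext p
    simp only [mem_filter, mem_offDiag, mem_inter]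
    tauto
  -- a point lying in `m` of the sets satisfies `2m ≤ 2 + m(m-1)`, as `(m-1)(m-2) ≥ 0`
  have multiplicity_le : ∀ m : ℕ, 2 * m ≤ 2 + (m * m - m) := fun m => by
    have : m ≤ m * m := Nat.le_mul_self m
    zify [this]
    nlinarith [sq_nonneg ((m : ℤ) - 1)]
  rw [hA, hAA, mul_sum, card_eq_sum_ones U, mul_sum, ← sum_add_distrib]
  exact sum_le_sum fun x _ => by rw [offDiag_card]; simpa using multiplicity_le _

lemma card_filter_card_le (s : Finset α) (m : ℕ) :
    #{X ∈ s.powerset | #X ≤ m} = ∑ k ∈ range (m + 1), (#s).choose k := by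
  rw [card_eq_sum_card_fiberwise (f := card) (t := range (m + 1))
    fun X hX => mem_range.mpr (Nat.lt_succ_of_le (mem_filter.mp hX).2)]
  refine sum_congr rfl fun k hk => ?_
  rw [← card_powersetCard, powersetCard_eq_filter, filter_filter]
  congr 1
  refine filter_congr fun X _ => ?_
  constructor
  · exact fun h => h.2
  · exact fun h => ⟨h ▸ Nat.le_of_lt_succ (mem_range.mp hk), h⟩

lemma card_filter_prod_eq_sum_card {β : Type*} [Fintype α] [Fintype β] (p : α → Prop) (q : α → β → Prop)
    [DecidablePred p] [∀ a, DecidablePred (q a)] :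
    #{x : α × β | p x.1 ∧ q x.1 x.2} = ∑ a with p a, #{b | q a b} := by
  rw [card_filter, Fintype.sum_prod_type, sum_filter]
  refine sum_congr rfl fun a _ => ?_
  split_ifs with ha <;>
    simp only [ha, true_and, false_and, if_false, sum_const_zero, card_filter]

end Counting

section Cube

variable {ι : Type*} [Fintype ι] [DecidableEq ι]

/-- The intersection of the balls of radius `ε` about `∅` and `D` in the cube `Finset ι` with the
symmetric-difference metric; `diffSetEquiv u` carries `B_ε(u) ∩ B_ε(v)` onto it. -/
def ballInter (ε : ℕ) (D : Finset ι) : Finset (Finset ι) := {X | #X ≤ ε ∧ #(X ∆ D) ≤ ε}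

@[simp]
lemma mem_ballInter {ε : ℕ} {D X : Finset ι} : X ∈ ballInter ε D ↔ #X ≤ ε ∧ #(X ∆ D) ≤ ε := by
  simp [ballInter]

omit [Fintype ι] in
lemma erase_symmDiff_of_mem {X D : Finset ι} {j : ι} (hjX : j ∈ X) (hjD : j ∉ D) :
    X.erase j ∆ D = X ∆ insert j D ∧ X.erase j ∆ insert j D = X ∆ D := by
  constructor <;> ext i <;> simp only [mem_symmDiff, mem_erase, mem_insert] <;> grind

omit [Fintype ι] in
lemma symmDiff_subset_symmDiff_insert {X D : Finset ι} {j : ι} (hjX : j ∉ X) :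
    X ∆ D ⊆ X ∆ insert j D := by
  intro i
  simp only [mem_symmDiff, mem_insert]
  grind

/-- `X ↦ X.erase j` maps the sets gained by adding `j` to `D` injectively to the sets lost. -/
lemma card_ballInter_insert_le {ε : ℕ} {D : Finset ι} {j : ι} (hj : j ∉ D) :
    #(ballInter ε (insert j D)) ≤ #(ballInter ε D) := by
  rw [← card_sdiff_le_card_sdiff_iff]
  have hjX : ∀ X ∈ ballInter ε (insert j D) \ ballInter ε D, j ∈ X := by
    intro X hX
    simp only [mem_sdiff, mem_ballInter, not_and, not_le] at hX
    by_contra hjX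
    have := card_le_card (symmDiff_subset_symmDiff_insert (D := D) hjX)
    have := hX.2 hX.1.1
    omega
  refine card_le_card_of_injOn (·.erase j) (fun X hX => ?_)
    ((erase_injOn' j).mono fun X hX => hjX X hX)
  obtain ⟨h1, h2⟩ := erase_symmDiff_of_mem (hjX X hX) hj
  simp only [mem_coe, mem_sdiff, mem_ballInter, not_and, not_le] at hX ⊢
  rw [h1, h2]
  exact ⟨⟨(card_erase_le).trans hX.1.1, hX.1.2⟩, fun _ => hX.2 hX.1.1⟩

lemma card_ballInter_antitone {ε : ℕ} {D D' : Finset ι} (h : D ⊆ D') :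
    #(ballInter ε D') ≤ #(ballInter ε D) := by
  rw [← union_sdiff_of_subset h]
  induction D' \ D using Finset.induction_on with
  | empty => rw [union_empty]
  | insert j E _ ih =>
    rw [union_insert]
    by_cases hj : j ∈ D ∪ E
    · rwa [insert_eq_of_mem hj]
    · exact (card_ballInter_insert_le hj).trans ih

/-- The numerator of `Iball n ε d`: `k = |X ∩ D|` and `i = |X \ D|` for `X ∈ ballInter ε D`. -/
def ballInterCount (n ε d : ℕ) : ℕ :=
  ∑ k ∈ Icc (d - ε) (min ε d),
    d.choose k * ∑ i ∈ range (min (ε - k) (ε + k - d) + 1), (n - d).choose i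

omit [Fintype ι] in
lemma card_symmDiff_eq (X D : Finset ι) : #(X ∆ D) = #(X \ D) + (#D - #(X ∩ D)) := by
  rw [Finset.symmDiff_def, card_union_of_disjoint disjoint_sdiff_sdiff, card_sdiff (s := X) (t := D)]

lemma card_ballInter_le_ballInterCount {ε : ℕ} {D : Finset ι} :
    #(ballInter ε D) ≤ ballInterCount (Fintype.card ι) ε #D := by
  have hsplit : ∀ X : Finset ι, #X = #(X ∩ D) + #(X \ D) := fun X =>
    (card_inter_add_card_sdiff X D).symm
  have hk : ∀ X ∈ ballInter ε D, #(X ∩ D) ∈ Icc (#D - ε) (min ε #D) := by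
    intro X hX
    rw [mem_ballInter, card_symmDiff_eq] at hX
    have := hsplit X
    have := card_le_card (inter_subset_right (s₁ := X) (s₂ := D))
    simp only [mem_Icc, le_min_iff]
    omega
  rw [ballInterCount, card_eq_sum_card_fiberwise hk]
  refine sum_le_sum fun k _ => ?_
  calc #{X ∈ ballInter ε D | #(X ∩ D) = k}
      ≤ #(D.powersetCard k ×ˢ {B ∈ Dᶜ.powerset | #B ≤ min (ε - k) (ε + k - #D)}) := by
        refine card_le_card_of_injOn (fun X => (X ∩ D, X \ D)) (fun X hX => ?_) ?_
        · simp only [coe_filter, Set.mem_ofPred_eq, mem_ballInter, card_symmDiff_eq] at hX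
          have := hsplit X
          simp only [mem_coe, mem_product, mem_powersetCard, mem_filter, mem_powerset,
            le_min_iff]
          refine ⟨⟨inter_subset_right, hX.2⟩, ?_, ?_⟩
          · exact fun i hi => mem_compl.mpr (mem_sdiff.mp hi).2
          · omega
        · intro X _ Y _ hXY
          simp only [Prod.mk.injEq] at hXY
          rw [← sdiff_union_inter X D, ← sdiff_union_inter Y D, hXY.1, hXY.2]
    _ = _ := by rw [card_product, card_powersetCard, card_filter_card_le, card_compl]

lemma card_ballInter_le_of_lt_card {ε : ℕ} {D : Finset ι} (hD : ε < #D) :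
    #(ballInter ε D) ≤ ballInterCount (Fintype.card ι) ε (ε + 1) := by
  obtain ⟨D₀, hD₀, hcard⟩ := exists_subset_card_eq (Nat.succ_le_of_lt hD)
  have hD₀count := card_ballInter_le_ballInterCount (ε := ε) (D := D₀)
  rw [hcard] at hD₀count
  exact (card_ballInter_antitone hD₀).trans hD₀count

def hammingBall (u : ι → Bool) (ε : ℕ) : Finset (ι → Bool) := {w | hammingDist w u ≤ ε}

@[simp]
lemma mem_hammingBall {u w : ι → Bool} {ε : ℕ} : w ∈ hammingBall u ε ↔ hammingDist w u ≤ ε := by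
  simp [hammingBall]

def diffSetEquiv (u : ι → Bool) : (ι → Bool) ≃ Finset ι where
  toFun w := {i | w i ≠ u i}
  invFun X i := if i ∈ X then !u i else u i
  left_inv w := by
    funext i
    cases hw : w i <;> cases hu : u i <;> simp [hw, hu]
  right_inv X := by
    ext i
    by_cases h : i ∈ X <;> simp [h]

lemma hammingDist_eq_card_diffSetEquiv (u w : ι → Bool) :
    hammingDist w u = #(diffSetEquiv u w) := rfl

lemma hammingDist_eq_card_symmDiff (u v w : ι → Bool) :
    hammingDist w v = #(diffSetEquiv u w ∆ diffSetEquiv u v) := by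
  rw [hammingDist]
  congr 1
  ext i
  simp only [diffSetEquiv, Equiv.coe_fn_mk, mem_symmDiff, mem_filter, mem_univ, true_and]
  cases w i <;> cases u i <;> cases v i <;> decide

lemma card_hammingBall (u : ι → Bool) (ε : ℕ) :
    #(hammingBall u ε) = ∑ k ∈ range (ε + 1), (Fintype.card ι).choose k := by
  rw [← card_univ, ← card_filter_card_le, powerset_univ]
  exact card_equiv (diffSetEquiv u) fun w => by
    simp [hammingDist_eq_card_diffSetEquiv]

lemma card_hammingBall_inter (u v : ι → Bool) (ε : ℕ) :
    #(hammingBall u ε ∩ hammingBall v ε) = #(ballInter ε (diffSetEquiv u v)) :=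
  card_equiv (diffSetEquiv u) fun w => by
    rw [mem_inter, mem_hammingBall, mem_hammingBall, hammingDist_eq_card_symmDiff u v w,
      mem_ballInter, hammingDist_eq_card_diffSetEquiv]

lemma card_hammingBall_inter_le {u v : ι → Bool} {ε : ℕ} (huv : ε < hammingDist u v) :
    #(hammingBall u ε ∩ hammingBall v ε) ≤ ballInterCount (Fintype.card ι) ε (ε + 1) := by
  rw [card_hammingBall_inter]
  rw [hammingDist_comm, hammingDist_eq_card_diffSetEquiv] at huv
  exact card_ballInter_le_of_lt_card huv

end Cube

lemma Vball_mul_two_pow (n ε : ℕ) :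
    Vball n ε * 2 ^ n = ((∑ k ∈ range (ε + 1), n.choose k : ℕ) : ℝ) := by
  rw [Vball, div_mul_cancel₀ _ (by positivity)]
  push_cast
  rfl

lemma Iball_mul_two_pow (n ε d : ℕ) : Iball n ε d * 2 ^ n = (ballInterCount n ε d : ℝ) := by
  rw [Iball, div_mul_cancel₀ _ (by positivity), ballInterCount]
  push_cast
  rfl

section Configuration

variable {ι κ : Type*} [Fintype ι] [DecidableEq ι] [Fintype κ]

def ballUnion (f : κ → ι → Bool) (ε : ℕ) : Finset (ι → Bool) :=
  univ.biUnion fun k => hammingBall (f k) ε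

lemma card_ballUnion_div_le (f : κ → ι → Bool) (ε : ℕ) :
    (#(ballUnion f ε) : ℝ) / 2 ^ Fintype.card ι ≤
      Fintype.card κ * Vball (Fintype.card ι) ε := by
  rw [ballUnion, div_le_iff₀ (by positivity), mul_assoc, Vball_mul_two_pow]
  have := (card_biUnion_le (s := univ) (t := fun k => hammingBall (f k) ε))
  simp only [card_hammingBall, sum_const, card_univ, smul_eq_mul] at this
  exact_mod_cast this

lemma le_card_ballUnion_div [DecidableEq κ] (f : κ → ι → Bool) {ε : ℕ}
    (hf : ∀ i j, i ≠ j → ε < hammingDist (f i) (f j)) :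
    Fintype.card κ * Vball (Fintype.card ι) ε -
        Fintype.card κ * ((Fintype.card κ : ℝ) - 1) / 2 * Iball (Fintype.card ι) ε (ε + 1) ≤
      (#(ballUnion f ε) : ℝ) / 2 ^ Fintype.card ι := by
  have hpairs : ∑ p ∈ (univ : Finset κ).offDiag,
      #(hammingBall (f p.1) ε ∩ hammingBall (f p.2) ε) ≤
        (Fintype.card κ * Fintype.card κ - Fintype.card κ) *
          ballInterCount (Fintype.card ι) ε (ε + 1) := by
    rw [← card_univ, ← offDiag_card, ← smul_eq_mul, ← sum_const]
    exact sum_le_sum fun p hp =>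
      card_hammingBall_inter_le (hf p.1 p.2 (mem_offDiag.mp hp).2.2)
  have hbonf := (two_mul_sum_card_le univ fun k => hammingBall (f k) ε).trans
    (Nat.add_le_add_left hpairs _)
  simp only [card_hammingBall, sum_const, card_univ, smul_eq_mul] at hbonf
  have hcast := Nat.cast_sub (R := ℝ) (Nat.le_mul_self (Fintype.card κ))
  rw [ballUnion, le_div_iff₀ (by positivity), sub_mul, mul_assoc, Vball_mul_two_pow,
    mul_assoc _ (Iball _ _ _), Iball_mul_two_pow]
  have := (Nat.cast_le (α := ℝ)).mpr hbonf
  push_cast [hcast] at this ⊢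
  linarith

end Configuration

/-- Bounds on the conditional probability that an independent uniform template `ṽ`
matches one of `N` uniform templates, given that no two of them are within Hamming
distance `ε` of each other. -/
theorem cond_prob_match_bounds (n N ε : ℕ)
    (hne : (univ.filter (fun f : Fin N → (Fin n → Bool) =>
        ∀ i j, i ≠ j → ε < hammingDist (f i) (f j))).Nonempty) :
    (N : ℝ) * Vball n ε - (N : ℝ) * ((N : ℝ) - 1) / 2 * Iball n ε (ε + 1) ≤
      ((univ.filter (fun p : (Fin N → (Fin n → Bool)) × (Fin n → Bool) =>
          (∀ i j, i ≠ j → ε < hammingDist (p.1 i) (p.1 j)) ∧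
            ∃ k, hammingDist p.2 (p.1 k) ≤ ε)).card : ℝ) /
        (((univ.filter (fun f : Fin N → (Fin n → Bool) =>
            ∀ i j, i ≠ j → ε < hammingDist (f i) (f j))).card : ℝ) * 2 ^ n) ∧
    ((univ.filter (fun p : (Fin N → (Fin n → Bool)) × (Fin n → Bool) =>
        (∀ i j, i ≠ j → ε < hammingDist (p.1 i) (p.1 j)) ∧
          ∃ k, hammingDist p.2 (p.1 k) ≤ ε)).card : ℝ) /
      (((univ.filter (fun f : Fin N → (Fin n → Bool) =>
          ∀ i j, i ≠ j → ε < hammingDist (f i) (f j))).card : ℝ) * 2 ^ n) ≤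
    (N : ℝ) * Vball n ε := by
  set S := univ.filter fun f : Fin N → (Fin n → Bool) =>
    ∀ i j, i ≠ j → ε < hammingDist (f i) (f j)
  have hcount : #{p : (Fin N → (Fin n → Bool)) × (Fin n → Bool) |
      (∀ i j, i ≠ j → ε < hammingDist (p.1 i) (p.1 j)) ∧ ∃ k, hammingDist p.2 (p.1 k) ≤ ε} =
      ∑ f ∈ S, #(ballUnion f ε) :=
    (card_filter_prod_eq_sum_card (fun f : Fin N → (Fin n → Bool) =>
      ∀ i j, i ≠ j → ε < hammingDist (f i) (f j)) fun f w => ∃ k, hammingDist w (f k) ≤ ε).trans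
      (sum_congr rfl fun f _ => congrArg card (by ext w; simp [ballUnion]))
  rw [hcount, Nat.cast_sum, mul_comm (#S : ℝ), ← div_div, sum_div, ← expect_eq_sum_div_card]
  constructor
  · refine le_expect hne fun f hf => ?_
    simpa using le_card_ballUnion_div f (mem_filter.mp hf).2
  · refine expect_le hne fun f _ => ?_
    simpa using card_ballUnion_div_le f ε
end

section
/- If N < 1 + 2^{-ε}·((1 - ε/n)/(ε/n))^{⌈(ε+1)/2⌉}/√(8ε(1 - ε/n)), with ε/n < 1/2, then N·V_ε - (N(N-1)/2)·I^ε_{ε+1} > 0. -/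
/-!
Write `r = ε / (n - ε)` and `c = ⌈(ε + 1) / 2⌉`. A point in two `ε`-balls whose centres are at
distance `ε + 1` differs from them in at most `(ε - 1) / 2 = ε - c` of the `n - ε - 1` coordinates
on which the centres agree, so `I` is at most `2 ^ (ε + 1)` times the binomial tail
`∑_{i ≤ ε - c} C(n, i) / 2 ^ n`. For `2ε < n` this tail is at most twice its last term, and each
step down from `C(n, ε)` costs a factor `r`; hence `I ≤ 2 ^ (ε + 2) r ^ c V`. The hypothesis on `N`
makes `(N - 1) 2 ^ (ε + 2) r ^ c < 4 / √(8ε(1 - ε/n)) < 2`, and then `(N - 1) / 2 · I < V`.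
-/

open Finset

namespace Nat

theorem choose_mul_sub_le_choose_succ_mul {n ε j : ℕ} (hj : j + 1 ≤ ε) :
    n.choose j * (n - ε) ≤ n.choose (j + 1) * ε := by
  refine Nat.le_of_mul_le_mul_right ?_ j.succ_pos
  calc n.choose j * (n - ε) * (j + 1) = n.choose j * ((j + 1) * (n - ε)) := by ring
    _ ≤ n.choose j * (ε * (n - j)) := by gcongr; omega
    _ = ε * (n.choose (j + 1) * (j + 1)) := by rw [choose_succ_right_eq]; ring
    _ = n.choose (j + 1) * ε * (j + 1) := by ring

theorem choose_mul_sub_pow_le_choose_add_mul_pow {n ε : ℕ} :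
    ∀ {j t : ℕ}, j + t ≤ ε → n.choose j * (n - ε) ^ t ≤ n.choose (j + t) * ε ^ t
  | _, 0, _ => by simp
  | j, t + 1, h =>
    calc n.choose j * (n - ε) ^ (t + 1) = n.choose j * (n - ε) * (n - ε) ^ t := by ring
      _ ≤ n.choose (j + 1) * ε * (n - ε) ^ t :=
        Nat.mul_le_mul_right _ (choose_mul_sub_le_choose_succ_mul (by omega))
      _ = n.choose (j + 1) * (n - ε) ^ t * ε := by ring
      _ ≤ n.choose (j + 1 + t) * ε ^ t * ε :=
        Nat.mul_le_mul_right _ (choose_mul_sub_pow_le_choose_add_mul_pow (by omega))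
      _ = n.choose (j + (t + 1)) * ε ^ (t + 1) := by rw [add_right_comm, add_assoc]; ring

theorem two_mul_choose_le_choose_succ {n j : ℕ} (h : 3 * j + 2 ≤ n) :
    2 * n.choose j ≤ n.choose (j + 1) := by
  refine Nat.le_of_mul_le_mul_right ?_ j.succ_pos
  calc 2 * n.choose j * (j + 1) = n.choose j * (2 * (j + 1)) := by ring
    _ ≤ n.choose j * (n - j) := Nat.mul_le_mul_left _ (by omega)
    _ = n.choose (j + 1) * (j + 1) := (choose_succ_right_eq n j).symm

/-- Below `n / 3` the binomial coefficients at least double at each step, so the tail is at most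
twice its last term. -/
theorem sum_range_choose_le_two_mul_choose {n : ℕ} :
    ∀ {M : ℕ}, 3 * M ≤ n + 1 → ∑ i ∈ range (M + 1), n.choose i ≤ 2 * n.choose M
  | 0, _ => by simp
  | M + 1, h => by
    have ih := sum_range_choose_le_two_mul_choose (n := n) (M := M) (by omega)
    have hdouble := two_mul_choose_le_choose_succ (n := n) (j := M) (by omega)
    rw [sum_range_succ]
    omega

end Nat

theorem choose_le_choose_add_mul_div_pow {n ε j t : ℕ} (h : j + t ≤ ε) (hε : ε < n) :
    (n.choose j : ℝ) ≤ n.choose (j + t) * ((ε : ℝ) / (n - ε)) ^ t := by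
  have hsub : (0 : ℝ) < n - ε := sub_pos.2 (by exact_mod_cast hε)
  rw [div_pow, ← mul_div_assoc, le_div_iff₀ (by positivity), ← Nat.cast_sub hε.le]
  exact_mod_cast Nat.choose_mul_sub_pow_le_choose_add_mul_pow h

theorem choose_div_two_pow_le_Vball (n : ℕ) {ε k : ℕ} (hk : k ≤ ε) :
    (n.choose k : ℝ) / 2 ^ n ≤ Vball n ε := by
  unfold Vball
  gcongr
  exact single_le_sum (f := fun i ↦ (n.choose i : ℝ)) (fun _ _ ↦ by positivity)
    (mem_range.2 (by omega))

theorem Vball_pos (n ε : ℕ) : 0 < Vball n ε :=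
  lt_of_lt_of_le (by simp) (choose_div_two_pow_le_Vball n (Nat.zero_le ε))

theorem Iball_succ_le_sum_range_choose (n ε : ℕ) :
    Iball n ε (ε + 1) ≤
      2 ^ (ε + 1) * (∑ i ∈ range ((ε - 1) / 2 + 1), (n.choose i : ℝ)) / 2 ^ n := by
  set tail := ∑ i ∈ range ((ε - 1) / 2 + 1), (n.choose i : ℝ)
  have hinner : ∀ k ∈ Icc (ε + 1 - ε) (min ε (ε + 1)),
      ∑ i ∈ range (min (ε - k) (ε + k - (ε + 1)) + 1), ((n - (ε + 1)).choose i : ℝ) ≤ tail := by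
    intro k hk
    rw [mem_Icc] at hk
    calc _ ≤ ∑ i ∈ range (min (ε - k) (ε + k - (ε + 1)) + 1), (n.choose i : ℝ) :=
          sum_le_sum fun i _ ↦ by exact_mod_cast Nat.choose_le_choose i (Nat.sub_le n (ε + 1))
      _ ≤ tail :=
          sum_le_sum_of_subset_of_nonneg (range_subset_range.2 (by omega))
            fun _ _ _ ↦ by positivity
  unfold Iball
  gcongr
  calc _ ≤ ∑ k ∈ Icc (ε + 1 - ε) (min ε (ε + 1)), ((ε + 1).choose k : ℝ) * tail :=
        sum_le_sum fun k hk ↦ by gcongr; exact hinner k hk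
    _ ≤ ∑ k ∈ range (ε + 1 + 1), ((ε + 1).choose k : ℝ) * tail :=
        sum_le_sum_of_subset_of_nonneg (fun k hk ↦ by simp at hk ⊢; omega)
          fun _ _ _ ↦ by positivity
    _ = 2 ^ (ε + 1) * tail := by
        rw [← sum_mul]
        congr 1
        exact_mod_cast Nat.sum_range_choose (ε + 1)

theorem Iball_succ_le_mul_Vball {n ε : ℕ} (hε : 0 < ε) (hn : 2 * ε < n) :
    Iball n ε (ε + 1) ≤ 2 ^ (ε + 2) * ((ε : ℝ) / (n - ε)) ^ ((ε + 2) / 2) * Vball n ε := by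
  set M := (ε - 1) / 2
  set r := (ε : ℝ) / (n - ε)
  have hr : 0 ≤ r := div_nonneg (by positivity) (sub_nonneg.2 (by exact_mod_cast (by omega : ε ≤ n)))
  have htail : (∑ i ∈ range (M + 1), (n.choose i : ℝ)) ≤ 2 * n.choose M := by
    exact_mod_cast Nat.sum_range_choose_le_two_mul_choose (n := n) (M := M) (by omega)
  have hM : (n.choose M : ℝ) ≤ n.choose ε * r ^ ((ε + 2) / 2) := by
    have h := choose_le_choose_add_mul_div_pow (n := n) (j := M) (t := (ε + 2) / 2)
      (show M + (ε + 2) / 2 ≤ ε by omega) (by omega)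
    rwa [show M + (ε + 2) / 2 = ε by omega] at h
  calc Iball n ε (ε + 1) ≤ 2 ^ (ε + 1) * (∑ i ∈ range (M + 1), (n.choose i : ℝ)) / 2 ^ n :=
        Iball_succ_le_sum_range_choose n ε
    _ ≤ 2 ^ (ε + 1) * (2 * (n.choose ε * r ^ ((ε + 2) / 2))) / 2 ^ n := by gcongr; linarith
    _ = 2 ^ (ε + 2) * r ^ ((ε + 2) / 2) * ((n.choose ε : ℝ) / 2 ^ n) := by ring
    _ ≤ 2 ^ (ε + 2) * r ^ ((ε + 2) / 2) * Vball n ε :=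
        mul_le_mul_of_nonneg_left (choose_div_two_pow_le_Vball n le_rfl) (by positivity)

theorem mul_sub_mul_sub_one_div_two_mul_pos {N V I K : ℝ} (hN : 1 ≤ N) (hV : 0 < V)
    (hI : I ≤ K * V) (hK : (N - 1) * K < 2) : 0 < N * V - N * (N - 1) / 2 * I := by
  have hNI : (N - 1) * I ≤ (N - 1) * K * V := by
    rw [mul_assoc]; exact mul_le_mul_of_nonneg_left hI (by linarith)
  have hhalf : (N - 1) / 2 * I < V := by nlinarith
  nlinarith

theorem lower_bound_pos_of_N_lt_Nmax (n ε N : ℕ) (hN : 1 ≤ N)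
    (hhalf : (ε : ℝ) / n < 1/2)
    (hNmax : (N : ℝ) < 1 +
      (2 : ℝ) ^ (-(ε : ℝ)) * ((1 - (ε : ℝ) / n) / ((ε : ℝ) / n)) ^ ((ε + 2) / 2) /
        Real.sqrt (8 * ε * (1 - (ε : ℝ) / n))) :
    0 < (N : ℝ) * Vball n ε - (N : ℝ) * ((N : ℝ) - 1) / 2 * Iball n ε (ε + 1) := by
  have hN1 : (1 : ℝ) ≤ N := by exact_mod_cast hN
  have hq : (ε : ℝ) / n ≠ 0 := by
    intro hq
    rw [hq, div_zero, zero_pow (by omega), mul_zero, zero_div, add_zero] at hNmax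
    linarith
  have hε : 0 < ε := Nat.pos_of_ne_zero fun h ↦ hq (by simp [h])
  have hn : 2 * ε < n := by
    have hn0 : 0 < n := Nat.pos_of_ne_zero fun h ↦ hq (by simp [h])
    rw [div_lt_iff₀ (by positivity)] at hhalf
    exact_mod_cast (by linarith : 2 * (ε : ℝ) < n)
  set c := (ε + 2) / 2
  set r := (ε : ℝ) / (n - ε)
  have hr : 0 < r := div_pos (by positivity) (sub_pos.2 (by exact_mod_cast (by omega : ε < n)))
  have hratio : (1 - (ε : ℝ) / n) / ((ε : ℝ) / n) = r⁻¹ := by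
    have : (n : ℝ) ≠ 0 := Nat.cast_ne_zero.2 (by omega)
    simp only [r]; field_simp
  have hsqrt : 2 < Real.sqrt (8 * ε * (1 - (ε : ℝ) / n)) := by
    have : (1 : ℝ) ≤ ε := by exact_mod_cast hε
    rw [Real.lt_sqrt (by norm_num)]; nlinarith
  rw [hratio, Real.rpow_neg zero_le_two, Real.rpow_natCast, inv_pow] at hNmax
  refine mul_sub_mul_sub_one_div_two_mul_pos hN1 (Vball_pos n ε)
    (Iball_succ_le_mul_Vball hε hn) ?_
  calc ((N : ℝ) - 1) * (2 ^ (ε + 2) * r ^ c)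
      < (2 ^ ε)⁻¹ * (r ^ c)⁻¹ / Real.sqrt (8 * ε * (1 - (ε : ℝ) / n)) * (2 ^ (ε + 2) * r ^ c) := by
        gcongr; linarith
    _ = 4 / Real.sqrt (8 * ε * (1 - (ε : ℝ) / n)) := by field_simp; ring
    _ < 2 := by rw [div_lt_iff₀ (by linarith)]; linarith
end
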